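/- arXiv:1809.09033 — 2 statements merged into one kernel-verified Lean document; each statement's English description precedes it below -/
import Mathlib

section
/- Let u and v be finite Lyndon words with u <lex v. Then for every n ≥ 1 the inequalities uⁿ <lex uⁿv ≤lex v hold; in fact uⁿv <lex v. -/
/-!
If `u` is a prefix of the Lyndon word `v`, say `v = u ++ w`, then `w` is a proper nonempty suffix
of `v`, so `v < w` and hence `u ++ v < u ++ w = v`. Otherwise `u < v` is decided at a position
inside `u`, and that position also decides `u ++ v < v`. As `x < y` implies `u ++ x < u ++ y`,
the inequality `u ++ v < v` iterates to `uⁿ ++ v < v`.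
-/

/-- A finite word is a Lyndon word if it is nonempty and lexicographically
strictly smaller than all of its proper nonempty suffixes. -/
def IsLyndon {A : Type*} [LinearOrder A] (w : List A) : Prop :=
  w ≠ [] ∧ ∀ i : ℕ, 0 < i → i < w.length → w < w.drop i

namespace List

variable {α : Type*}

theorem lt_append_of_ne_nil [LT α] (l : List α) {t : List α} (ht : t ≠ []) : l < l ++ t := by
  induction l with
  | nil =>
    obtain ⟨a, t, rfl⟩ := exists_cons_of_ne_nil ht
    exact Lex.nil
  | cons _ _ ih => exact Lex.cons ih

theorem append_lt_of_lt_of_not_prefix [LT α] {u v : List α} (h : u < v) (hp : ¬u <+: v)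
    (t : List α) : u ++ t < v := by
  induction h with
  | nil => exact absurd nil_prefix hp
  | cons _ ih => exact Lex.cons (ih fun h => hp (cons_prefix_cons.mpr ⟨rfl, h⟩))
  | rel hab => exact Lex.rel hab

theorem flatten_replicate_append_lt [Preorder α] {u v : List α} (h : u ++ v < v) :
    ∀ {n : ℕ}, 0 < n → (replicate n u).flatten ++ v < v
  | 1, _ => by simpa using h
  | n + 2, _ =>
    calc (replicate (n + 2) u).flatten ++ v
        = u ++ ((replicate (n + 1) u).flatten ++ v) := by simp [replicate_succ]
      _ < u ++ v := append_left_lt (flatten_replicate_append_lt h n.succ_pos)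
      _ < v := h

end List

theorem IsLyndon.append_lt {A : Type*} [LinearOrder A] {u v : List A} (hu : u ≠ [])
    (hv : IsLyndon v) (huv : u < v) : u ++ v < v := by
  by_cases hp : u <+: v
  · obtain ⟨w, rfl⟩ := hp
    have hw : w ≠ [] := by
      rintro rfl
      simp at huv
    have hvw : u ++ w < w := by
      simpa using hv.2 u.length (List.length_pos_iff.mpr hu)
        (by simpa using List.length_pos_iff.mpr hw)
    exact List.append_left_lt hvw
  · exact List.append_lt_of_lt_of_not_prefix huv hp v

theorem lyndon_pow_mul_lt {A : Type*} [LinearOrder A] (u v : List A)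
    (hu : IsLyndon u) (hv : IsLyndon v) (huv : u < v) (n : ℕ) (hn : 1 ≤ n) :
    (List.replicate n u).flatten < (List.replicate n u).flatten ++ v ∧
    (List.replicate n u).flatten ++ v < v :=
  ⟨List.lt_append_of_ne_nil _ hv.1,
    List.flatten_replicate_append_lt (hv.append_lt hu.1 huv) hn⟩
end

section
/- Let u be a finite Lyndon word of the form u = x·a·y where a is a letter, and let b be a letter with a < b. Then uⁿxb is a Lyndon word for every natural number n. -/
theorem List.append_lt_append_of_lt_of_length_le {A : Type*} [LT A] {s t : List A} (h : s < t)
    (hlen : t.length ≤ s.length) (s' t' : List A) : s ++ s' < t ++ t' := by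
  induction h with
  | nil => simp at hlen
  | rel hab => exact List.Lex.rel hab
  | cons _ ih => exact List.Lex.cons (ih (by simpa using hlen))

theorem List.append_flatten_replicate_append_lt {A : Type*} [LT A] {u w : List A}
    (h : u ++ w < w) (n : ℕ) :
    u ++ ((List.replicate n u).flatten ++ w) < (List.replicate n u).flatten ++ w := by
  induction n with
  | zero => simpa using h
  | succ n ih => simpa [List.replicate_succ, List.append_assoc] using List.append_left_lt ih

namespace IsLyndon

variable {A : Type*} [LinearOrder A] {u w : List A}

theorem append_lt_drop_append (hu : IsLyndon u) {i : ℕ} (hi₀ : 0 < i) (hi : i < u.length)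
    (s t : List A) : u ++ s < u.drop i ++ t :=
  List.append_lt_append_of_lt_of_length_le (hu.2 i hi₀ hi) (by simp) s t

theorem append (hu : IsLyndon u) (hw : IsLyndon w) (h : u ++ w < w) : IsLyndon (u ++ w) := by
  refine ⟨by simp [hw.1], fun i hi₀ hi => ?_⟩
  rcases lt_trichotomy i u.length with hlt | rfl | hgt
  · rw [List.drop_append_of_le_length hlt.le]
    exact hu.append_lt_drop_append hi₀ hlt w w
  · simpa using h
  · rw [List.drop_append, List.drop_eq_nil_of_le hgt.le, List.nil_append]
    rw [List.length_append] at hi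
    exact h.trans (hw.2 _ (by omega) (by omega))

theorem flatten_replicate_append (hu : IsLyndon u) (hw : IsLyndon w) (h : u ++ w < w) (n : ℕ) :
    IsLyndon ((List.replicate n u).flatten ++ w) := by
  induction n with
  | zero => simpa using hw
  | succ n ih =>
    simpa [List.replicate_succ, List.append_assoc] using
      hu.append ih (List.append_flatten_replicate_append_lt h n)

theorem prefix_append_singleton {x y : List A} {a b : A} (hu : IsLyndon (x ++ a :: y))
    (hab : a < b) : IsLyndon (x ++ [b]) := by
  refine ⟨by simp, fun j hj₀ hj => ?_⟩
  rw [List.length_append, List.length_singleton] at hj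
  rw [List.drop_append_of_le_length (by omega)]
  set v := x.drop j
  have hv : v.length + 1 ≤ x.length := by rw [List.length_drop]; omega
  set p := x.take (v.length + 1)
  have hp : p.length = (v ++ [b]).length := by simp [p, hv]
  have hpv : p < v ++ [b] := by
    by_contra! hle
    have hva : v ++ [a] < p := lt_of_lt_of_le (List.append_left_lt (List.Lex.rel hab)) hle
    have hdrop : (x ++ a :: y).drop j = v ++ [a] ++ y := by
      rw [List.drop_append_of_le_length (by omega)]; simp [v]
    have hlt := List.append_lt_append_of_lt_of_length_le hva (by simp [hp])
      y (x.drop (v.length + 1) ++ a :: y)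
    rw [← List.append_assoc, List.take_append_drop, ← hdrop] at hlt
    exact lt_asymm hlt (hu.2 j hj₀ (by simp only [List.length_append, List.length_cons]; omega))
  simpa [p, ← List.append_assoc] using
    List.append_lt_append_of_lt_of_length_le hpv hp.ge (x.drop (v.length + 1) ++ [b]) []

end IsLyndon

theorem lyndon_pow_prefix_increase_letter {A : Type*} [LinearOrder A]
    (x y : List A) (a b : A)
    (hu : IsLyndon (x ++ a :: y)) (hab : a < b) (n : ℕ) :
    IsLyndon ((List.replicate n (x ++ a :: y)).flatten ++ (x ++ [b])) := by
  have hlt : x ++ a :: y ++ (x ++ [b]) < x ++ [b] := by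
    simpa using (List.append_left_lt (List.Lex.rel hab) : x ++ a :: (y ++ (x ++ [b])) < x ++ [b])
  exact hu.flatten_replicate_append (hu.prefix_append_singleton hab) hlt n
end
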